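/- Let i, j > 0 with i + j = 1 and let ψ : ℕ → ℝ be strictly positive, non-increasing, with ψ(r) ≤ 2^{−1/max{i,j}}/2 for all r. For nonzero integers q, let R_ψ(q) ⊆ [0,1]² (torus) denote the rectangle of points γ with ‖q x₁ − γ₁‖ ≤ ψ(|q|)^i and ‖q x₂ − γ₂‖ ≤ ψ(|q|)^j, and let R_{2ψ}(q) be the analogous rectangle with ψ replaced by 2ψ. Then for any finite index set Q of nonzero integers, μ(⋃_{q∈Q} R_{2ψ}(q)) ≤ 2 μ(⋃_{q∈Q} R_ψ(q)). -/

import Mathlib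

open MeasureTheory Set Filter

/-- Distance to the nearest integer. -/
noncomputable def nint (y : ℝ) : ℝ := |y - (round y : ℝ)|

/-- `pw y e = y ^ (1/e)`, with the convention that `y ^ (1/0) = 0`. -/
noncomputable def pw (y e : ℝ) : ℝ := if e = 0 then 0 else y ^ (1 / e)

/-- A vector is irrational if `1, x₁, x₂` are linearly independent over `ℚ`. -/
def IrrVec (x : ℝ × ℝ) : Prop :=
  ∀ a b c : ℤ, (a : ℝ) * x.1 + (b : ℝ) * x.2 + (c : ℝ) = 0 → a = 0 ∧ b = 0 ∧ c = 0

/-- The set `Bad(i,j)` of `(i,j)`-badly approximable vectors. -/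
def Badij (i j : ℝ) (x : ℝ × ℝ) : Prop :=
  IrrVec x ∧ ∃ c > (0 : ℝ), ∀ q : ℕ, 0 < q →
    max (pw (nint (q * x.1)) i) (pw (nint (q * x.2)) j) > c / q

/-- The twisted well-approximable set `W^x_{(i,j)}(ψ)`. -/
def twistedW (x : ℝ × ℝ) (i j : ℝ) (ψ : ℕ → ℝ) : Set (ℝ × ℝ) :=
  {γ ∈ Set.Icc (0 : ℝ × ℝ) 1 |
    {q : ℤ | q ≠ 0 ∧
      max (pw (nint (q * x.1 - γ.1)) i) (pw (nint (q * x.2 - γ.2)) j)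
        ≤ ψ q.natAbs}.Infinite}

/-- The rectangle `R_ψ(q)` of sidelengths `2ψ(|q|)^i`, `2ψ(|q|)^j` centred at `q x` mod 1,
viewed inside the unit square. -/
def rect (x : ℝ × ℝ) (i j : ℝ) (ψ : ℕ → ℝ) (q : ℤ) : Set (ℝ × ℝ) :=
  {γ ∈ Set.Icc (0 : ℝ × ℝ) 1 |
    nint (q * x.1 - γ.1) ≤ ψ q.natAbs ^ i ∧ nint (q * x.2 - γ.2) ≤ ψ q.natAbs ^ j}

/-! On the torus `𝕋² = (ℝ/ℤ)²`, `rect x i j φ q` is the box of half-sides `φ(|q|)^i`, `φ(|q|)^j`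
centred at `q x`. Add the boxes one at a time, in order of decreasing radius. The part that a
new doubled box adds to the union of the earlier doubled boxes, shrunk about its centre by the
factors `2^i`, `2^j`, has half its area (`2^i 2^j = 2`) and lies inside the new `ψ`-box but outside
every earlier `ψ`-box: a point of an earlier, larger `ψ`-box moves by at most `(2^i - 1) ψ^i`, resp.
`(2^j - 1) ψ^j`, when expanded back, so it would stay inside the earlier doubled box. -/

local notation "𝕋" => UnitAddCircle

lemma AddCircle.norm_coe_le_abs {p : ℝ} (y : ℝ) : ‖(y : AddCircle p)‖ ≤ |y| :=
  QuotientAddGroup.norm_mk_le_norm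

lemma UnitAddCircle.abs_le_of_norm_coe_le {y r : ℝ} (hy : |y| ≤ 1 / 2) (h : ‖(y : 𝕋)‖ ≤ r) :
    |y| ≤ r := by
  rwa [(AddCircle.norm_coe_eq_abs_iff 1 one_ne_zero).2 (by simpa using hy)] at h

def toTorus : ℝ × ℝ → 𝕋 × 𝕋 := Prod.map (↑) (↑)

def torusBox (c : 𝕋 × 𝕋) (a b : ℝ) : Set (𝕋 × 𝕋) :=
  Metric.closedBall c.1 a ×ˢ Metric.closedBall c.2 b

lemma measurableSet_torusBox (c : 𝕋 × 𝕋) (a b : ℝ) : MeasurableSet (torusBox c a b) :=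
  Metric.isClosed_closedBall.measurableSet.prod Metric.isClosed_closedBall.measurableSet

lemma measurable_toTorus : Measurable toTorus :=
  AddCircle.measurable_mk'.prodMap AddCircle.measurable_mk'

lemma toTorus_surjective : Function.Surjective toTorus :=
  QuotientAddGroup.mk_surjective.prodMap QuotientAddGroup.mk_surjective

lemma measurePreserving_toTorus (a : ℝ × ℝ) :
    MeasurePreserving toTorus
      (volume.restrict (Ioc a.1 (a.1 + 1) ×ˢ Ioc a.2 (a.2 + 1))) volume := by
  rw [Measure.volume_eq_prod, ← Measure.prod_restrict]
  exact (AddCircle.measurePreserving_mk 1 a.1).prod (AddCircle.measurePreserving_mk 1 a.2)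

lemma volume_preimage_toTorus_inter_Ioc {U : Set (𝕋 × 𝕋)} (hU : MeasurableSet U) (a : ℝ × ℝ) :
    volume (toTorus ⁻¹' U ∩ Ioc a.1 (a.1 + 1) ×ˢ Ioc a.2 (a.2 + 1)) = volume U := by
  rw [← Measure.restrict_apply (measurable_toTorus hU),
    (measurePreserving_toTorus a).measure_preimage hU.nullMeasurableSet]

lemma volume_Icc_inter_preimage_toTorus {U : Set (𝕋 × 𝕋)} (hU : MeasurableSet U) :
    volume (Icc 0 1 ∩ toTorus ⁻¹' U) = volume U := by
  have hIcc : Icc (0 : ℝ × ℝ) 1 =ᵐ[volume] Ioc (0 : ℝ) (0 + 1) ×ˢ Ioc (0 : ℝ) (0 + 1) := by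
    rw [Icc_prod_eq, Measure.volume_eq_prod, zero_add]
    exact Measure.set_prod_ae_eq Ioc_ae_eq_Icc.symm Ioc_ae_eq_Icc.symm
  rw [measure_congr (hIcc.inter (ae_eq_refl (toTorus ⁻¹' U))), inter_comm]
  exact volume_preimage_toTorus_inter_Ioc hU (0, 0)

def expandAt (a : ℝ × ℝ) (s t : ℝ) (z : ℝ × ℝ) : ℝ × ℝ :=
  (a.1 + s * (z.1 - a.1), a.2 + t * (z.2 - a.2))

lemma volume_preimage_expandAt (a : ℝ × ℝ) {s t : ℝ} (hs : 0 < s) (ht : 0 < t)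
    (S : Set (ℝ × ℝ)) :
    volume (expandAt a s t ⁻¹' S) = ENNReal.ofReal (s * t)⁻¹ * volume S := by
  let L : ℝ × ℝ →ₗ[ℝ] ℝ × ℝ := (s • LinearMap.id).prodMap (t • LinearMap.id)
  have hdet : LinearMap.det L = s * t := by
    simp [L, LinearMap.det_prodMap]
  have hfactor : expandAt a s t = (· + a) ∘ L ∘ (· + -a) := by
    funext z
    ext <;> simp [expandAt, L] <;> ring
  rw [hfactor, preimage_comp, preimage_comp, measure_preimage_add_right,
    Measure.addHaar_preimage_linearMap _ (by rw [hdet]; positivity), measure_preimage_add_right,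
    hdet, abs_of_pos (by positivity)]

lemma mem_Ioc_of_expand_mem_Ioc {a z s : ℝ} (hs : 1 ≤ s)
    (h : a + s * (z - a) ∈ Ioc (a - 1 / 2) (a - 1 / 2 + 1)) :
    z ∈ Ioc (a - 1 / 2) (a - 1 / 2 + 1) := by
  obtain ⟨h₁, h₂⟩ := h
  rcases le_total z a with hz | hz
  · constructor <;> nlinarith
  · constructor <;> nlinarith

lemma dist_coe_le_of_expand {a z s ρ : ℝ} (hs : 1 ≤ s) (hz : |s * (z - a)| ≤ 1 / 2)
    (h : dist ((a + s * (z - a) : ℝ) : 𝕋) a ≤ s * ρ) :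
    dist (z : 𝕋) a ≤ ρ ∧ dist ((a + s * (z - a) : ℝ) : 𝕋) z ≤ (s - 1) * ρ := by
  simp only [dist_eq_norm, ← AddCircle.coe_sub, add_sub_cancel_left] at h ⊢
  have hza : |z - a| ≤ ρ := by
    have := UnitAddCircle.abs_le_of_norm_coe_le hz h
    rw [abs_mul, abs_of_pos (by linarith)] at this
    exact le_of_mul_le_mul_left this (by linarith)
  refine ⟨(AddCircle.norm_coe_le_abs _).trans hza, (AddCircle.norm_coe_le_abs _).trans ?_⟩
  calc |a + s * (z - a) - z| = (s - 1) * |z - a| := by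
        rw [show a + s * (z - a) - z = (s - 1) * (z - a) by ring, abs_mul,
          abs_of_nonneg (by linarith)]
    _ ≤ (s - 1) * ρ := by gcongr

lemma volume_torusBox_diff_le {c : 𝕋 × 𝕋} {s t ρ₁ ρ₂ : ℝ} (hs : 1 ≤ s) (ht : 1 ≤ t)
    {P P' : Set (𝕋 × 𝕋)} (hP : MeasurableSet P) (hP' : MeasurableSet P')
    (hthick : ∀ z ∈ P, ∀ w : 𝕋 × 𝕋,
      dist w.1 z.1 ≤ (s - 1) * ρ₁ → dist w.2 z.2 ≤ (t - 1) * ρ₂ → w ∈ P') :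
    volume (torusBox c (s * ρ₁) (t * ρ₂) \ P')
      ≤ ENNReal.ofReal (s * t) * volume (torusBox c ρ₁ ρ₂ \ P) := by
  obtain ⟨a, rfl⟩ := toTorus_surjective c
  set C := Ioc (a.1 - 1 / 2) (a.1 - 1 / 2 + 1) ×ˢ Ioc (a.2 - 1 / 2) (a.2 - 1 / 2 + 1)
  have hB' := (measurableSet_torusBox (toTorus a) (s * ρ₁) (t * ρ₂)).diff hP'
  have hB := (measurableSet_torusBox (toTorus a) ρ₁ ρ₂).diff hP
  -- Inside the cell `C` the torus distance to `toTorus a` is the Euclidean one, so the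
  -- expansion about `a` carries the small box onto the large one.
  have hshrink : expandAt a s t ⁻¹' (toTorus ⁻¹' (torusBox (toTorus a) (s * ρ₁) (t * ρ₂) \ P') ∩ C)
      ⊆ toTorus ⁻¹' (torusBox (toTorus a) ρ₁ ρ₂ \ P) ∩ C := by
    rintro z ⟨⟨⟨hz₁, hz₂⟩, hzP'⟩, hC₁, hC₂⟩
    simp only [expandAt, mem_Ioc] at hC₁ hC₂
    have hcell₁ : |s * (z.1 - a.1)| ≤ 1 / 2 := abs_le.2 ⟨by linarith, by linarith⟩
    have hcell₂ : |t * (z.2 - a.2)| ≤ 1 / 2 := abs_le.2 ⟨by linarith, by linarith⟩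
    obtain ⟨hd₁, hw₁⟩ := dist_coe_le_of_expand hs hcell₁ hz₁
    obtain ⟨hd₂, hw₂⟩ := dist_coe_le_of_expand ht hcell₂ hz₂
    exact ⟨⟨⟨hd₁, hd₂⟩, fun hzP => hzP' (hthick _ hzP _ hw₁ hw₂)⟩,
      mem_Ioc_of_expand_mem_Ioc hs hC₁, mem_Ioc_of_expand_mem_Ioc ht hC₂⟩
  have hst : 0 < s * t := by positivity
  calc volume (torusBox (toTorus a) (s * ρ₁) (t * ρ₂) \ P')
      = volume (toTorus ⁻¹' (torusBox (toTorus a) (s * ρ₁) (t * ρ₂) \ P') ∩ C) :=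
        (volume_preimage_toTorus_inter_Ioc hB' (a.1 - 1 / 2, a.2 - 1 / 2)).symm
    _ = ENNReal.ofReal (s * t) * volume (expandAt a s t ⁻¹'
          (toTorus ⁻¹' (torusBox (toTorus a) (s * ρ₁) (t * ρ₂) \ P') ∩ C)) := by
        rw [volume_preimage_expandAt a (by positivity) (by positivity), ← mul_assoc,
          ← ENNReal.ofReal_mul hst.le, mul_inv_cancel₀ hst.ne', ENNReal.ofReal_one, one_mul]
    _ ≤ ENNReal.ofReal (s * t) * volume (toTorus ⁻¹' (torusBox (toTorus a) ρ₁ ρ₂ \ P) ∩ C) := by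
        gcongr
    _ = ENNReal.ofReal (s * t) * volume (torusBox (toTorus a) ρ₁ ρ₂ \ P) := by
        congr 1
        exact volume_preimage_toTorus_inter_Ioc hB (a.1 - 1 / 2, a.2 - 1 / 2)

lemma dist_le_mul_of_dist_le {X : Type*} [PseudoMetricSpace X] {w z c : X} {s ρ ρ' : ℝ}
    (hs : 1 ≤ s) (hρ : ρ ≤ ρ') (hw : dist w z ≤ (s - 1) * ρ) (hz : dist z c ≤ ρ') :
    dist w c ≤ s * ρ' :=
  calc dist w c ≤ dist w z + dist z c := dist_triangle w z c
    _ ≤ (s - 1) * ρ' + ρ' := add_le_add (hw.trans (mul_le_mul_of_nonneg_left hρ (by linarith))) hz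
    _ = s * ρ' := by ring

theorem volume_iUnion_torusBox_le {ι : Type*} (c : ι → 𝕋 × 𝕋) {r : ι → ℝ} (hr : ∀ q, 0 ≤ r q)
    {i j k : ℝ} (hi : 0 ≤ i) (hj : 0 ≤ j) (hk : 1 ≤ k) (Q : Finset ι) :
    volume (⋃ q ∈ Q, torusBox (c q) ((k * r q) ^ i) ((k * r q) ^ j))
      ≤ ENNReal.ofReal (k ^ (i + j)) * volume (⋃ q ∈ Q, torusBox (c q) (r q ^ i) (r q ^ j)) := by
  classical
  have hki : 1 ≤ k ^ i := Real.one_le_rpow hk hi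
  have hkj : 1 ≤ k ^ j := Real.one_le_rpow hk hj
  simp only [Real.mul_rpow (zero_le_one.trans hk) (hr _),
    Real.rpow_add (zero_lt_one.trans_le hk)]
  induction Q using Finset.induction_on_min_value r with
  | empty => simp
  | insert q Q hq hmin ih =>
    set P := ⋃ q' ∈ Q, torusBox (c q') (r q' ^ i) (r q' ^ j)
    set P' := ⋃ q' ∈ Q, torusBox (c q') (k ^ i * r q' ^ i) (k ^ j * r q' ^ j)
    have hP : MeasurableSet P :=
      Finset.measurableSet_biUnion _ fun _ _ => measurableSet_torusBox _ _ _
    have hP' : MeasurableSet P' :=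
      Finset.measurableSet_biUnion _ fun _ _ => measurableSet_torusBox _ _ _
    have hthick : ∀ z ∈ P, ∀ w : 𝕋 × 𝕋, dist w.1 z.1 ≤ (k ^ i - 1) * r q ^ i →
        dist w.2 z.2 ≤ (k ^ j - 1) * r q ^ j → w ∈ P' := by
      intro z hz w hw₁ hw₂
      simp only [P, P', mem_iUnion₂] at hz ⊢
      obtain ⟨q', hq', hz₁, hz₂⟩ := hz
      have hrq := hmin q' hq'
      exact ⟨q', hq',
        dist_le_mul_of_dist_le hki (Real.rpow_le_rpow (hr q) hrq hi) hw₁ hz₁,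
        dist_le_mul_of_dist_le hkj (Real.rpow_le_rpow (hr q) hrq hj) hw₂ hz₂⟩
    have hstep := volume_torusBox_diff_le (c := c q) hki hkj hP hP' hthick
    rw [Finset.set_biUnion_insert, Finset.set_biUnion_insert, union_comm,
      union_comm (torusBox _ _ _), ← measure_add_sdiff hP'.nullMeasurableSet,
      ← measure_add_sdiff hP.nullMeasurableSet, mul_add]
    exact add_le_add ih hstep

lemma nint_eq_norm (y : ℝ) : nint y = ‖(y : 𝕋)‖ := UnitAddCircle.norm_eq.symm

lemma rect_eq (x : ℝ × ℝ) (i j : ℝ) (φ : ℕ → ℝ) (q : ℤ) :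
    rect x i j φ q =
      Icc 0 1 ∩ toTorus ⁻¹' torusBox (toTorus ((q : ℝ) • x)) (φ q.natAbs ^ i) (φ q.natAbs ^ j) := by
  ext γ
  simp only [rect, torusBox, toTorus, mem_ofPred_eq, mem_inter_iff, mem_preimage, Prod.map,
    mem_prod, Metric.mem_closedBall, Prod.smul_fst, Prod.smul_snd, smul_eq_mul, nint_eq_norm,
    dist_eq_norm, AddCircle.coe_sub, norm_sub_rev (γ.1 : 𝕋), norm_sub_rev (γ.2 : 𝕋)]

lemma volume_iUnion_rect (x : ℝ × ℝ) (i j : ℝ) (φ : ℕ → ℝ) (Q : Finset ℤ) :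
    volume (⋃ q ∈ Q, rect x i j φ q) = volume (⋃ q ∈ Q,
      torusBox (toTorus ((q : ℝ) • x)) (φ q.natAbs ^ i) (φ q.natAbs ^ j)) := by
  simp only [rect_eq, ← inter_iUnion₂, ← preimage_iUnion₂]
  exact volume_Icc_inter_preimage_toTorus
    (Finset.measurableSet_biUnion _ fun _ _ => measurableSet_torusBox _ _ _)

theorem stmt15_general (i j : ℝ) (hi : 0 < i) (hj : 0 < j) (hij : i + j = 1)
    (x : ℝ × ℝ) (ψ : ℕ → ℝ) (hpos : ∀ r, 0 < ψ r)
    (Q : Finset ℤ) :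
    volume (⋃ q ∈ Q, rect x i j (fun r => 2 * ψ r) q)
      ≤ 2 * volume (⋃ q ∈ Q, rect x i j ψ q) := by
  rw [volume_iUnion_rect, volume_iUnion_rect]
  have h := volume_iUnion_torusBox_le (fun q : ℤ => toTorus ((q : ℝ) • x))
    (fun q => (hpos q.natAbs).le) hi.le hj.le one_le_two Q
  rwa [hij, Real.rpow_one, ENNReal.ofReal_ofNat] at h

theorem stmt15 (i j : ℝ) (hi : 0 < i) (hj : 0 < j) (hij : i + j = 1)
    (x : ℝ × ℝ) (ψ : ℕ → ℝ) (hpos : ∀ r, 0 < ψ r) (hanti : Antitone ψ)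
    (hsmall : ∀ r, ψ r ≤ (2 : ℝ) ^ (-(1 / max i j)) / 2)
    (Q : Finset ℤ) (hQ : (0 : ℤ) ∉ Q) :
    volume (⋃ q ∈ Q, rect x i j (fun r => 2 * ψ r) q)
      ≤ 2 * volume (⋃ q ∈ Q, rect x i j ψ q) :=
  stmt15_general i j hi hj hij x ψ hpos Q
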